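/- arXiv:1406.1570 — 3 statements merged into one kernel-verified Lean document; each statement's English description precedes it below -/
import Mathlib

section
/- Let F : ℝ → ℝ be continuous, G an antiderivative of F, and K an antiderivative of e^{−G}. Let α : ℝ² → ℝ be a C² function satisfying Δα = F(α)·|∇α|², where Δ is the Laplacian and |∇α|² = α_x² + α_y². Then f := K ∘ α is harmonic, i.e., Δf = 0. -/
/-- Partial derivative in the first variable. -/
noncomputable def pdx (α : ℝ → ℝ → ℝ) (x y : ℝ) : ℝ := deriv (fun s => α s y) x

/-- Partial derivative in the second variable. -/
noncomputable def pdy (α : ℝ → ℝ → ℝ) (x y : ℝ) : ℝ := deriv (fun s => α x s) y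

/-- Laplacian. -/
noncomputable def lap (α : ℝ → ℝ → ℝ) (x y : ℝ) : ℝ :=
  pdx (pdx α) x y + pdy (pdy α) x y

theorem deriv_deriv_comp {K k u : ℝ → ℝ} {x k' : ℝ} (hK : ∀ t, HasDerivAt K (k t) t)
    (hk : HasDerivAt k k' (u x)) (hu : Differentiable ℝ u)
    (hu' : DifferentiableAt ℝ (deriv u) x) :
    deriv (deriv (fun s => K (u s))) x = k (u x) * deriv (deriv u) x + k' * deriv u x ^ 2 := by
  have hderiv : deriv (fun s => K (u s)) = fun s => k (u s) * deriv u s :=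
    funext fun s => ((hK (u s)).comp s (hu s).hasDerivAt).deriv
  have hprod : HasDerivAt (fun s => k (u s) * deriv u s)
      (k' * deriv u x * deriv u x + k (u x) * deriv (deriv u) x) x :=
    (hk.comp x (hu x).hasDerivAt).mul hu'.hasDerivAt
  rw [hderiv, hprod.deriv]
  ring

theorem contDiff_slice_fst {α : ℝ → ℝ → ℝ} {n : WithTop ℕ∞}
    (hα : ContDiff ℝ n (fun p : ℝ × ℝ => α p.1 p.2)) (y : ℝ) :
    ContDiff ℝ n (fun s => α s y) :=
  hα.comp (contDiff_id.prodMk contDiff_const)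

theorem contDiff_slice_snd {α : ℝ → ℝ → ℝ} {n : WithTop ℕ∞}
    (hα : ContDiff ℝ n (fun p : ℝ × ℝ => α p.1 p.2)) (x : ℝ) :
    ContDiff ℝ n (fun s => α x s) :=
  hα.comp (contDiff_const.prodMk contDiff_id)

theorem lap_comp {K k : ℝ → ℝ} {α : ℝ → ℝ → ℝ} {x y k' : ℝ}
    (hK : ∀ t, HasDerivAt K (k t) t) (hk : HasDerivAt k k' (α x y))
    (hα : ContDiff ℝ 2 (fun p : ℝ × ℝ => α p.1 p.2)) :
    lap (fun a b => K (α a b)) x y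
      = k (α x y) * lap α x y + k' * (pdx α x y ^ 2 + pdy α x y ^ 2) := by
  have hx := contDiff_slice_fst hα y
  have hy := contDiff_slice_snd hα x
  have hxx := deriv_deriv_comp (u := fun s => α s y) hK hk (hx.differentiable two_ne_zero)
    (hx.differentiable_deriv_two x)
  have hyy := deriv_deriv_comp (u := fun s => α x s) hK hk (hy.differentiable two_ne_zero)
    (hy.differentiable_deriv_two y)
  simp only [lap, pdx, pdy] at hxx hyy ⊢
  rw [hxx, hyy]
  ring

theorem stmt_4_general (F G K : ℝ → ℝ)
    (hG : ∀ t, HasDerivAt G (F t) t)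
    (hK : ∀ t, HasDerivAt K (Real.exp (-G t)) t)
    (α : ℝ → ℝ → ℝ) (hα : ContDiff ℝ 2 (fun p : ℝ × ℝ => α p.1 p.2))
    (hpde : ∀ x y, lap α x y = F (α x y) * (pdx α x y ^ 2 + pdy α x y ^ 2)) :
    ∀ x y, lap (fun x y => K (α x y)) x y = 0 := by
  intro x y
  -- `K'' = -F K'`, so the first-order term cancels against the equation for `α`
  have hK' : HasDerivAt (fun t => Real.exp (-G t))
      (Real.exp (-G (α x y)) * -F (α x y)) (α x y) :=
    (hG _).neg.exp
  rw [lap_comp hK hK' hα, hpde]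
  ring

theorem stmt_4 (F G K : ℝ → ℝ) (hF : Continuous F)
    (hG : ∀ t, HasDerivAt G (F t) t)
    (hK : ∀ t, HasDerivAt K (Real.exp (-G t)) t)
    (α : ℝ → ℝ → ℝ) (hα : ContDiff ℝ 2 (fun p : ℝ × ℝ => α p.1 p.2))
    (hpde : ∀ x y, lap α x y = F (α x y) * (pdx α x y ^ 2 + pdy α x y ^ 2)) :
    ∀ x y, lap (fun x y => K (α x y)) x y = 0 :=
  stmt_4_general F G K hG hK α hα hpde
end

section
/- Let F : ℝ → ℝ be continuous, G an antiderivative of F, and K an antiderivative of e^{−G}. Then K is strictly increasing, and its inverse function ψ = K⁻¹ (defined on the range of K) is C² and satisfies ψ''(t) = F(ψ(t))·ψ'(t)² for all t in the range of K. -/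
/-!
Since `K' = exp (-G)` is continuous and never zero, `K` is strictly differentiable with invertible
derivative everywhere. Hence `K` is an open map, and its left inverse `ψ` satisfies the autonomous
equation `ψ' = g ∘ ψ` with `g = exp ∘ G` on the open set `range K`. Such an equation bootstraps
regularity (`g` of class `Cⁿ` makes `ψ` of class `Cⁿ⁺¹`), and the chain rule gives
`ψ'' = g'(ψ) g(ψ) = F(ψ) exp (G ψ)² = F(ψ) ψ'²`.
-/

open Set Filter Topology

section AutonomousODE

variable {𝕜 : Type*} [NontriviallyNormedField 𝕜]

theorem contDiff_one_of_hasDerivAt {E : Type*} [NormedAddCommGroup E] [NormedSpace 𝕜 E]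
    {f f' : 𝕜 → E} (hf' : Continuous f') (hf : ∀ x, HasDerivAt f (f' x) x) : ContDiff 𝕜 1 f :=
  contDiff_one_iff_deriv.2 ⟨fun x => (hf x).differentiableAt, by
    simpa only [funext fun x => (hf x).deriv] using hf'⟩

variable {U : Set 𝕜} {g ψ : 𝕜 → 𝕜}

theorem contDiffOn_succ_of_hasDerivAt_comp (hU : IsOpen U)
    (hψ : ∀ t ∈ U, HasDerivAt ψ (g (ψ t)) t) {n : ℕ} (hg : ContDiff 𝕜 n g) :
    ContDiffOn 𝕜 (n + 1) ψ U := by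
  have hderiv : EqOn (deriv ψ) (g ∘ ψ) U := fun t ht => (hψ t ht).deriv
  have hdiff : DifferentiableOn 𝕜 ψ U := fun t ht =>
    (hψ t ht).differentiableAt.differentiableWithinAt
  refine (contDiffOn_succ_iff_deriv_of_isOpen hU).2 ⟨hdiff, by simp, ?_⟩
  induction n with
  | zero =>
    exact (contDiffOn_zero.2 (hg.continuous.comp_continuousOn hdiff.continuousOn)).congr hderiv
  | succ n ih =>
    have hψn : ContDiffOn 𝕜 (n + 1) ψ U :=
      (contDiffOn_succ_iff_deriv_of_isOpen hU).2 ⟨hdiff, by simp, ih hg.of_succ⟩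
    exact_mod_cast (hg.comp_contDiffOn hψn).congr hderiv

theorem deriv_deriv_of_hasDerivAt_comp (hU : IsOpen U) (hψ : ∀ t ∈ U, HasDerivAt ψ (g (ψ t)) t)
    {t : 𝕜} (ht : t ∈ U) (hg : DifferentiableAt 𝕜 g (ψ t)) :
    deriv (deriv ψ) t = deriv g (ψ t) * g (ψ t) := by
  have hderiv : deriv ψ =ᶠ[𝓝 t] g ∘ ψ :=
    eventually_of_mem (hU.mem_nhds ht) fun s hs => (hψ s hs).deriv
  rw [hderiv.deriv_eq, (hg.hasDerivAt.comp t (hψ t ht)).deriv]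

end AutonomousODE

theorem stmt_6 (F G K : ℝ → ℝ) (hF : Continuous F)
    (hG : ∀ t, HasDerivAt G (F t) t)
    (hK : ∀ t, HasDerivAt K (Real.exp (-G t)) t)
    (ψ : ℝ → ℝ) (hψK : ∀ s, ψ (K s) = s) :
    StrictMono K ∧ ContDiffOn ℝ 2 ψ (Set.range K) ∧
      ∀ t ∈ Set.range K, deriv (deriv ψ) t = F (ψ t) * (deriv ψ t) ^ 2 := by
  have hG₁ : ContDiff ℝ 1 G := contDiff_one_of_hasDerivAt hF hG
  have hK_strict : ∀ s, HasStrictDerivAt K (Real.exp (-G s)) s := fun s =>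
    hasStrictDerivAt_of_hasDerivAt_of_continuousAt (.of_forall hK)
      hG₁.continuous.neg.rexp.continuousAt
  have hopen : IsOpen (range K) :=
    (isOpenMap_of_hasStrictDerivAt hK_strict fun s => (Real.exp_pos _).ne').isOpen_range
  have hψ : ∀ t ∈ range K, HasDerivAt ψ (Real.exp (G (ψ t))) t := by
    rintro _ ⟨s, rfl⟩
    have := ((hK_strict s).to_local_left_inverse (Real.exp_pos _).ne' (.of_forall hψK)).hasDerivAt
    rw [hψK]
    rwa [← Real.exp_neg, neg_neg] at this
  have hg : ContDiff ℝ 1 fun x => Real.exp (G x) := Real.contDiff_exp.comp hG₁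
  refine ⟨strictMono_of_hasDerivAt_pos hK fun s => Real.exp_pos _,
    contDiffOn_succ_of_hasDerivAt_comp hopen hψ hg, fun t ht => ?_⟩
  rw [deriv_deriv_of_hasDerivAt_comp hopen hψ ht (hg.differentiable one_ne_zero _),
    (hG _).exp.deriv, (hψ t ht).deriv]
  ring
end

section
/- Let c₁ > 9/8 be a real number and t a real number with 1/c₁ < sin²t < 8/9. Define a(t) = (−4 + (9+4c₁)sin²t − 9c₁sin⁴t + i√(2(8−9sin²t)(−1+c₁sin²t))) / (4(−1+c₁sin²t) − i√(2(8−9sin²t)(−1+c₁sin²t))). Then |a(t)|² + (−3/2)(−2 + 3sin²t) = (c₁/(2(−9+8c₁)))·(8−9sin²t)². -/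
/-! With `s = sin² t`, `u = -1 + c₁ s` and `v = 8 - 9 s`, the hypotheses make `u, v > 0`, so the
square root in `a` is that of `2uv`, and `|a|²` is the quotient of the squared moduli of the two
real-plus-imaginary parts. The squared modulus of the denominator factors as
`16u² + 2uv = 2 s u (8c₁ - 9)`, which is nonzero, and after clearing it the identity is polynomial
in `c₁` and `s`. -/

open Complex

theorem sq_norm_add_I_mul_sqrt_div_sub_I_mul_sqrt (x z w : ℝ) (hw : 0 ≤ w) :
    ‖((x : ℂ) + I * (√w : ℝ)) / ((z : ℂ) - I * (√w : ℝ))‖ ^ 2 = (x ^ 2 + w) / (z ^ 2 + w) := by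
  rw [Complex.sq_norm, Complex.normSq_div]
  congr 1 <;>
  · simp only [Complex.normSq_apply, add_re, sub_re, add_im, sub_im, ofReal_re, ofReal_im,
      mul_re, mul_im, I_re, I_im]
    linear_combination Real.mul_self_sqrt hw

theorem ricci_identity_of_sin_sq (c s : ℝ) (hu : -1 + c * s ≠ 0) (hs : s ≠ 0)
    (hc : -9 + 8 * c ≠ 0) :
    ((-4 + (9 + 4 * c) * s - 9 * c * s ^ 2) ^ 2 + 2 * (8 - 9 * s) * (-1 + c * s)) /
        ((4 * (-1 + c * s)) ^ 2 + 2 * (8 - 9 * s) * (-1 + c * s)) +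
      (-3 / 2) * (-2 + 3 * s) =
      c / (2 * (-9 + 8 * c)) * (8 - 9 * s) ^ 2 := by
  have hden : (4 * (-1 + c * s)) ^ 2 + 2 * (8 - 9 * s) * (-1 + c * s) =
      2 * s * (-1 + c * s) * (-9 + 8 * c) := by ring
  rw [hden, div_add' _ _ _ (by positivity), div_mul_eq_mul_div c,
    div_eq_div_iff (by positivity) (by positivity)]
  ring

theorem stmt_8 (c₁ t : ℝ) (hc : c₁ > 9 / 8)
    (h1 : 1 / c₁ < Real.sin t ^ 2) (h2 : Real.sin t ^ 2 < 8 / 9)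
    (a : ℂ)
    (ha : a = ((-4 + (9 + 4 * c₁) * Real.sin t ^ 2 - 9 * c₁ * Real.sin t ^ 4 : ℝ) +
        Complex.I * (Real.sqrt (2 * (8 - 9 * Real.sin t ^ 2) * (-1 + c₁ * Real.sin t ^ 2)) : ℝ)) /
      ((4 * (-1 + c₁ * Real.sin t ^ 2) : ℝ) -
        Complex.I * (Real.sqrt (2 * (8 - 9 * Real.sin t ^ 2) * (-1 + c₁ * Real.sin t ^ 2)) : ℝ))) :
    ‖a‖ ^ 2 + (-3 / 2) * (-2 + 3 * Real.sin t ^ 2) =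
      c₁ / (2 * (-9 + 8 * c₁)) * (8 - 9 * Real.sin t ^ 2) ^ 2 := by
  set s := Real.sin t ^ 2
  have hu : 0 < -1 + c₁ * s := by
    have := (div_lt_iff₀ (by linarith : (0 : ℝ) < c₁)).mp h1
    linarith
  have hs : 0 < s := by nlinarith
  have hv : 0 < 8 - 9 * s := by linarith
  have hsin4 : Real.sin t ^ 4 = s ^ 2 := by ring
  rw [ha, hsin4, sq_norm_add_I_mul_sqrt_div_sub_I_mul_sqrt _ _ _ (by positivity)]
  exact ricci_identity_of_sin_sq c₁ s hu.ne' hs.ne' (by linarith)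
end
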